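/- Let D₃ denote the simple graph on vertex set {0,1,2,3} whose edges are {0,1}, {0,2}, {1,2}, {1,3}, {2,3} (the complete graph on {0,1,2} together with an extra vertex 3 adjacent to exactly 1 and 2). For any simple graph G, the following are equivalent: (1) G has a proper 3-colouring and, for every pair of vertices u, v that are not adjacent in G, there is a proper 3-colouring c of G with c(u) = c(v); (2) there exist a nonempty index type ι and an injective map f from the vertices of G to functions ι → {0,1,2,3} such that for all vertices u, v: u and v are adjacent in G if and only if f(u)(i) and f(v)(i) are adjacent in D₃ for every i ∈ ι (that is, G is isomorphic to an induced subgraph of a nonempty direct power of D₃). -/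

import Mathlib

/-!
The map `D₃ → K₃` sending `3 ↦ 0` is a homomorphism identifying exactly the non-adjacent pairs
of distinct vertices, so folding the coordinates of an induced embedding into a power of `D₃`
gives the colourings required in (1).

Conversely, embed `G` into the power of `D₃` indexed by all proper `3`-colourings and all
vertices. A colouring coordinate is the colouring itself on the triangle `{0,1,2}`; these
coordinates reflect non-adjacency. The coordinate of a vertex `w` is a fixed colouring, permuted
so that `w` gets colour `0`, with `w` then moved to `3`: as `3` is adjacent to every neighbour
of `0` but `0` itself, this is still a homomorphism, and `w` is the only vertex sent to `3`,
which makes the embedding injective.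
-/

universe u

/-- The graph `D₃` on `{0,1,2,3}`: the complete graph on `{0,1,2}` together with the extra
vertex `3` adjacent to exactly `1` and `2` (i.e. all pairs of distinct vertices are
adjacent except the pair `{0,3}`). -/
def D3 : SimpleGraph (Fin 4) where
  Adj u v := u ≠ v ∧ ¬((u = 0 ∧ v = 3) ∨ (u = 3 ∧ v = 0))
  symm := by
    constructor
    intro u v h
    refine ⟨h.1.symm, ?_⟩
    rintro (⟨h1, h2⟩ | ⟨h1, h2⟩)
    · exact h.2 (Or.inr ⟨h2, h1⟩)
    · exact h.2 (Or.inl ⟨h2, h1⟩)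
  loopless := by
    constructor
    intro u h
    exact h.1 rfl

open Function

def IsProperColouring {V α : Type*} (G : SimpleGraph V) (c : V → α) : Prop :=
  ∀ u v, G.Adj u v → c u ≠ c v

instance : DecidableRel D3.Adj := fun u v =>
  decidable_of_iff (u ≠ v ∧ ¬((u = 0 ∧ v = 3) ∨ (u = 3 ∧ v = 0))) Iff.rfl

theorem d3_adj_castSucc {a b : Fin 3} (h : a ≠ b) : D3.Adj a.castSucc b.castSucc := by
  revert a b h; decide

theorem d3_adj_three_castSucc {a : Fin 3} (h : a ≠ 0) : D3.Adj 3 a.castSucc := by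
  revert a h; decide

def d3Fold : Fin 4 → Fin 3 := ![0, 1, 2, 0]

theorem d3Fold_ne_of_adj {x y : Fin 4} (h : D3.Adj x y) : d3Fold x ≠ d3Fold y := by
  revert x y h; decide

theorem d3Fold_eq_of_not_adj {x y : Fin 4} (h : ¬ D3.Adj x y) : d3Fold x = d3Fold y := by
  revert x y h; decide

theorem isProperColouring_d3Fold_comp {V : Type*} {G : SimpleGraph V} {φ : V → Fin 4}
    (hφ : ∀ u v, G.Adj u v → D3.Adj (φ u) (φ v)) : IsProperColouring G (d3Fold ∘ φ) :=
  fun u v h => d3Fold_ne_of_adj (hφ u v h)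

section LiftAt

variable {V : Type*} [DecidableEq V] {G : SimpleGraph V} {c : V → Fin 3}

def liftAt (c : V → Fin 3) (w : V) : V → Fin 4 :=
  fun v => if v = w then 3 else (Equiv.swap 0 (c w) (c v)).castSucc

theorem liftAt_eq_three_iff {w v : V} : liftAt c w v = 3 ↔ v = w := by
  unfold liftAt
  split_ifs with h
  · simp [h]
  · exact iff_of_false (Fin.castSucc_ne_last _) h

theorem adj_liftAt (hc : IsProperColouring G c) (w : V) {u v : V} (h : G.Adj u v) :
    D3.Adj (liftAt c w u) (liftAt c w v) := by
  have swap_ne_zero {x : V} (hx : c x ≠ c w) : Equiv.swap 0 (c w) (c x) ≠ 0 := by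
    rwa [Ne, Equiv.swap_apply_eq_iff, Equiv.swap_apply_left]
  by_cases hu : u = w
  · subst hu
    simp only [liftAt, if_neg (G.ne_of_adj h).symm]
    exact d3_adj_three_castSucc (swap_ne_zero (hc _ _ h).symm)
  by_cases hv : v = w
  · subst hv
    simp only [liftAt, if_neg hu]
    exact (d3_adj_three_castSucc (swap_ne_zero (hc _ _ h))).symm
  simp only [liftAt, if_neg hu, if_neg hv]
  exact d3_adj_castSucc ((Equiv.swap 0 (c w)).injective.ne (hc _ _ h))

end LiftAt

theorem exists_induced_embedding_into_D3_power {V : Type u} {G : SimpleGraph V} {c₀ : V → Fin 3}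
    (hc₀ : IsProperColouring G c₀)
    (hsep : ∀ u v, ¬ G.Adj u v → ∃ c : V → Fin 3, IsProperColouring G c ∧ c u = c v) :
    ∃ (ι : Type u) (_ : Nonempty ι) (f : V → ι → Fin 4),
      Injective f ∧ ∀ u v, G.Adj u v ↔ ∀ i, D3.Adj (f u i) (f v i) := by
  classical
  refine ⟨{c : V → Fin 3 // IsProperColouring G c} ⊕ V, ⟨.inl ⟨c₀, hc₀⟩⟩,
    fun v => Sum.elim (fun c => (c.1 v).castSucc) (fun w => liftAt c₀ w v), ?_,
    fun u v => ⟨fun h => ?_, fun h => ?_⟩⟩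
  · intro u v huv
    have : liftAt c₀ v u = liftAt c₀ v v := congrFun huv (.inr v)
    rwa [liftAt_eq_three_iff.2 rfl, liftAt_eq_three_iff] at this
  · rintro (c | w)
    · exact d3_adj_castSucc (c.2 u v h)
    · exact adj_liftAt hc₀ w h
  · by_contra huv
    obtain ⟨c, hc, hcuv⟩ := hsep u v huv
    have := h (.inl ⟨c, hc⟩)
    simp only [Sum.elim_inl, hcuv] at this
    exact D3.loopless.irrefl _ this

theorem stmt_3 {V : Type u} (G : SimpleGraph V) :
    ((∃ c : V → Fin 3, ∀ u v : V, G.Adj u v → c u ≠ c v) ∧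
      ∀ u v : V, ¬ G.Adj u v →
        ∃ c : V → Fin 3, (∀ x y : V, G.Adj x y → c x ≠ c y) ∧ c u = c v) ↔
    (∃ (ι : Type u) (_ : Nonempty ι) (f : V → ι → Fin 4),
      Function.Injective f ∧
        ∀ u v : V, G.Adj u v ↔ ∀ i : ι, D3.Adj (f u i) (f v i)) := by
  refine ⟨fun ⟨⟨c₀, hc₀⟩, hsep⟩ => exists_induced_embedding_into_D3_power hc₀ hsep, ?_⟩
  rintro ⟨ι, ⟨i₀⟩, f, -, hf⟩
  have proper (i : ι) : IsProperColouring G (d3Fold ∘ (f · i)) :=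
    isProperColouring_d3Fold_comp fun u v h => (hf u v).1 h i
  refine ⟨⟨_, proper i₀⟩, fun u v huv => ?_⟩
  obtain ⟨i, hi⟩ : ∃ i, ¬ D3.Adj (f u i) (f v i) := by
    simpa using mt (hf u v).2 huv
  exact ⟨_, proper i, d3Fold_eq_of_not_adj hi⟩
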